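/- Let A be an invertible N×N real matrix, b ∈ ℝ^N, ε > 0, and f(x) = A x − b. Suppose x₀ ∈ ℝ^N and x₁, x₂, … are generated by the modified full-memory NKA iteration with safeguard parameter ε, and suppose A x_j ≠ b for 0 ≤ j ≤ n (the iteration has not yet found the solution). Let r_n^G = A x_n^G − b denote the n-th GMRES residual for A x = b with starting point x₀, and let r_{n+1} = A x_{n+1} − b denote the (n+1)-st NKA residual. Then ‖r_{n+1}‖₂ ≤ (1 + ε) · ‖I − A‖ · ‖r_n^G‖₂. -/

import Mathlib

/-!
The residual `r_{n+1}` is `(1 - A)` applied to the safeguarded least-squares residual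
`f(xₙ) - ∑ z'ⱼ wⱼ`, whose norm exceeds the optimal one `ρₙ` by at most the factor `1 + ε`.
It remains to see `ρₙ ≤ ‖rₙᴳ‖`, i.e. that the steps `vⱼ = xⱼ - xⱼ₊₁`, `j < n`, span the
Krylov space `Kₙ`: then every point of `x₀ + Kₙ`, the GMRES iterate in particular, is of the
form `xₙ - ∑ yⱼ vⱼ`, and its residual is a competitor in the least-squares problem.

By induction every `vᵢ` lies in `K_{i+1} \ Kᵢ`. Modulo `K_{i+1}` one has
`v_{i+1} ≡ -(z'ᵢ + 1) wᵢ`; the safeguard forces `z'ᵢ + 1 ≠ 0` as soon as `ρ_{i+1} > 0`; and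
`wᵢ = A vᵢ ∉ K_{i+1}`, for otherwise `K_{i+1}` is `A`-invariant, so `A K_{i+1} = K_{i+1} ∋ r₀`
and `ρ_{i+1} = 0`. Finally `ρ_{i+1} > 0` because `r_{i+2} = (1 - A)(…)` is nonzero.
-/

open Function Submodule

section Krylov

variable {K V : Type*} [Field K] [AddCommGroup V] [Module K V]

def krylov (f : Module.End K V) (r : V) (j : ℕ) : Submodule K V :=
  span K (Set.range fun k : Fin j => (f ^ (k : ℕ)) r)

variable {f : Module.End K V} {r : V}

@[simp]
lemma krylov_zero : krylov f r 0 = ⊥ := by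
  simp [krylov]

lemma pow_apply_mem_krylov {j k : ℕ} (hk : k < j) : (f ^ k) r ∈ krylov f r j :=
  subset_span ⟨⟨k, hk⟩, rfl⟩

lemma krylov_mono : Monotone (krylov f r) := fun _ _ hij =>
  span_le.2 <| by
    rintro _ ⟨k, rfl⟩
    exact pow_apply_mem_krylov (k.2.trans_le hij)

lemma krylov_succ (j : ℕ) : krylov f r (j + 1) = K ∙ (f ^ j) r ⊔ krylov f r j := by
  refine le_antisymm (span_le.2 ?_) (sup_le ?_ (krylov_mono j.le_succ))
  · rintro _ ⟨k, rfl⟩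
    rcases (Nat.lt_succ_iff.1 k.2).lt_or_eq with hk | hk
    · exact mem_sup_right (pow_apply_mem_krylov hk)
    · exact mem_sup_left (by simp only [hk]; exact mem_span_singleton_self _)
  · exact (span_singleton_le_iff_mem _ _).2 (pow_apply_mem_krylov j.lt_succ_self)

lemma map_krylov_le (j : ℕ) : (krylov f r j).map f ≤ krylov f r (j + 1) := by
  rw [krylov, map_span, span_le]
  rintro _ ⟨_, ⟨k, rfl⟩, rfl⟩
  simpa [pow_succ'] using pow_apply_mem_krylov (f := f) (r := r) (Nat.succ_lt_succ k.2)

lemma apply_mem_krylov_succ {j : ℕ} {u : V} (hu : u ∈ krylov f r j) :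
    f u ∈ krylov f r (j + 1) :=
  map_krylov_le j (mem_map_of_mem hu)

lemma krylov_succ_le_sup_of_notMem {j : ℕ} {v : V} (hv : v ∈ krylov f r (j + 1))
    (hv' : v ∉ krylov f r j) : krylov f r (j + 1) ≤ K ∙ v ⊔ krylov f r j := by
  rw [krylov_succ, krylov, ← span_insert] at hv ⊢
  rw [krylov] at hv'
  rw [← span_insert]
  exact span_le.2 (Set.insert_subset (mem_span_insert_exchange hv hv')
    ((Set.subset_insert _ _).trans subset_span))

lemma map_krylov_eq_of_pow_mem (hf : Injective f) {j : ℕ} (h : (f ^ j) r ∈ krylov f r j) :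
    (krylov f r j).map f = krylov f r j := by
  have : FiniteDimensional K (krylov f r j) :=
    FiniteDimensional.span_of_finite K (Set.finite_range _)
  refine eq_of_le_of_finrank_le ((map_krylov_le j).trans ?_)
    (equivMapOfInjective f hf _).finrank_eq.le
  rw [krylov_succ]
  exact sup_le ((span_singleton_le_iff_mem _ _).2 h) le_rfl

lemma apply_notMem_krylov_succ {j : ℕ} {v : V} (hv : v ∈ krylov f r (j + 1))
    (hv' : v ∉ krylov f r j) (hpow : (f ^ (j + 1)) r ∉ krylov f r (j + 1)) :
    f v ∉ krylov f r (j + 1) := by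
  intro hfv
  have hinv : (krylov f r (j + 1)).map f ≤ krylov f r (j + 1) :=
    calc (krylov f r (j + 1)).map f ≤ (K ∙ v ⊔ krylov f r j).map f :=
          map_mono (krylov_succ_le_sup_of_notMem hv hv')
      _ = K ∙ f v ⊔ (krylov f r j).map f := by
          rw [Submodule.map_sup, map_span, Set.image_singleton]
      _ ≤ krylov f r (j + 1) :=
          sup_le ((span_singleton_le_iff_mem _ _).2 hfv) (map_krylov_le j)
  apply hpow
  rw [pow_succ', Module.End.mul_apply]
  exact hinv (mem_map_of_mem (pow_apply_mem_krylov j.lt_succ_self))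

lemma krylov_le_span {v : ℕ → V} {m : ℕ}
    (hv : ∀ j < m, v j ∈ krylov f r (j + 1) ∧ v j ∉ krylov f r j) :
    krylov f r m ≤ span K (Set.range fun j : Fin m => v j) := by
  induction m with
  | zero => simp
  | succ m ih =>
    refine (krylov_succ_le_sup_of_notMem (hv m m.lt_succ_self).1 (hv m m.lt_succ_self).2).trans
      (sup_le ((span_singleton_le_iff_mem _ _).2 (subset_span ⟨Fin.last m, rfl⟩)) ?_)
    refine (ih fun j hj => hv j (hj.trans m.lt_succ_self)).trans (span_mono ?_)
    rintro _ ⟨k, rfl⟩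
    exact ⟨k.castSucc, rfl⟩

end Krylov

lemma sub_mem_span_range_sub {R M : Type*} [Ring R] [AddCommGroup M] [Module R M]
    (x : ℕ → M) (i : ℕ) :
    x 0 - x i ∈ span R (Set.range fun j : Fin i => x j - x (j + 1)) := by
  rw [mem_span_range_iff_exists_fun]
  exact ⟨fun _ => 1, by
    simp only [one_smul, Fin.sum_univ_eq_sum_range (fun j => x j - x (j + 1)),
      Finset.sum_range_sub']⟩

lemma norm_sub_sum_smul_le_of_forall_ne {E ι : Type*} [SeminormedAddCommGroup E]
    [NormedSpace ℝ E] [Fintype ι] (g : E) (w : ι → E) {c c' : ι → ℝ} {l : ι}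
    (h : ∀ j, j ≠ l → c' j = c j) :
    ‖g - ∑ j, c' j • w j‖ ≤ ‖g - ∑ j, c j • w j‖ + ‖(c' l - c l) • w l‖ := by
  have hsum : ∑ j, c' j • w j - ∑ j, c j • w j = (c' l - c l) • w l := by
    simp_rw [← Finset.sum_sub_distrib, ← sub_smul]
    exact Finset.sum_eq_single l (fun j _ hj => by rw [h j hj, sub_self, zero_smul])
      (fun hl => absurd (Finset.mem_univ l) hl)
  calc ‖g - ∑ j, c' j • w j‖ = ‖(g - ∑ j, c j • w j) - (c' l - c l) • w l‖ := by
        rw [← hsum, sub_sub_sub_cancel_right]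
    _ ≤ _ := norm_sub_le _ _

section Safeguard

variable {E : Type*} [NormedAddCommGroup E]

/-- The safeguard of the modified NKA on the last coefficient `a ↦ a'`, with `w = wᵢ` and
`ρ` the optimal least-squares residual norm. -/
def IsSafeguardedUpdate (ε ρ : ℝ) (w : E) (a a' : ℝ) : Prop :=
  (w ≠ 0 → ∃ s : ℝ, (s = 1 ∨ s = -1) ∧ a' = a + s * ε * ρ / ‖w‖ ∧
      ∀ t : ℝ, (t = 1 ∨ t = -1) → |a + t * ε * ρ / ‖w‖ + 1| ≤ |a' + 1|) ∧
    (w = 0 → a' = a)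

namespace IsSafeguardedUpdate

variable {ε ρ a a' : ℝ} {w : E}

lemma norm_sub_smul_le [NormedSpace ℝ E] (h : IsSafeguardedUpdate ε ρ w a a') (hε : 0 ≤ ε)
    (hρ : 0 ≤ ρ) : ‖(a' - a) • w‖ ≤ ε * ρ := by
  by_cases hw : w = 0
  · simp [h.2 hw, mul_nonneg hε hρ]
  obtain ⟨s, hs, rfl, -⟩ := h.1 hw
  rw [norm_smul, add_sub_cancel_left, Real.norm_eq_abs, abs_div, abs_mul, abs_mul,
    abs_of_nonneg hε, abs_of_nonneg hρ, abs_norm, div_mul_cancel₀ _ (norm_ne_zero_iff.2 hw)]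
  rcases hs with rfl | rfl <;> simp

lemma add_one_ne_zero (h : IsSafeguardedUpdate ε ρ w a a') (hε : 0 < ε) (hρ : 0 < ρ)
    (hw : w ≠ 0) : a' + 1 ≠ 0 := by
  obtain ⟨-, -, -, hmax⟩ := h.1 hw
  have hd : 0 < ε * ρ / ‖w‖ := div_pos (mul_pos hε hρ) (norm_pos_iff.2 hw)
  have hplus := hmax 1 (Or.inl rfl)
  have hminus := hmax (-1) (Or.inr rfl)
  intro h0
  rw [h0, abs_zero, abs_nonpos_iff] at hplus hminus
  linarith [show a + 1 * ε * ρ / ‖w‖ + 1 - (a + -1 * ε * ρ / ‖w‖ + 1) = 2 * (ε * ρ / ‖w‖) by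
    ring]

end IsSafeguardedUpdate

end Safeguard

section NKA

variable {E : Type*} [NormedAddCommGroup E] [NormedSpace ℝ E]

variable (A : E →L[ℝ] E) (b : E) (x : ℕ → E)

/-- The paper's `f(xᵢ) - ∑ⱼ cⱼ wⱼ`. -/
def nkaResidual (i : ℕ) (c : Fin i → ℝ) : E :=
  (A (x i) - b) - ∑ j : Fin i, c j • A (x j.1 - x (j.1 + 1))

lemma le_norm_residual_of_sub_mem_span {i : ℕ} {ρ : ℝ}
    (hmin : ∀ y : Fin i → ℝ, ρ ≤ ‖nkaResidual A b x i y‖) {u : E}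
    (hu : u - x i ∈ span ℝ (Set.range fun j : Fin i => x j - x (j + 1))) :
    ρ ≤ ‖A u - b‖ := by
  obtain ⟨y, hy⟩ := (mem_span_range_iff_exists_fun ℝ).1 hu
  convert hmin (-y) using 2
  rw [nkaResidual, show u = x i + ∑ j, y j • (x j - x (j + 1)) by rw [hy]; abel]
  simp only [map_add, map_sum, map_smul, Pi.neg_apply, neg_smul, Finset.sum_neg_distrib]
  abel

/-- The modified full-memory NKA iteration for `f x = A x - b`, indexed from `0`
(`vⱼ = xⱼ - xⱼ₊₁`); at `i = 0` the sums are empty and `step` reads `x₁ = x₀ - f(x₀)`. -/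
structure IsModifiedNKA (ε : ℝ) (z z' : (i : ℕ) → Fin i → ℝ) : Prop where
  step : ∀ i, x (i + 1) = x i - (∑ j : Fin i, z' i j • (x j.1 - x (j.1 + 1)) +
    nkaResidual A b x i (z' i))
  isMin : ∀ i (y : Fin i → ℝ), ‖nkaResidual A b x i (z i)‖ ≤ ‖nkaResidual A b x i y‖
  agree : ∀ i (j : Fin i), j.1 + 1 ≠ i → z' i j = z i j
  safe : ∀ i (j : Fin i), j.1 + 1 = i →
    IsSafeguardedUpdate ε ‖nkaResidual A b x i (z i)‖ (A (x j.1 - x (j.1 + 1))) (z i j) (z' i j)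

namespace IsModifiedNKA

variable {A b x} {ε : ℝ} {z z' : (i : ℕ) → Fin i → ℝ}

local notation "𝒦" => krylov (A : E →ₗ[ℝ] E) (A (x 0) - b)

lemma residual_succ (h : IsModifiedNKA A b x ε z z') (i : ℕ) :
    A (x (i + 1)) - b = (1 - A) (nkaResidual A b x i (z' i)) := by
  rw [h.step i, nkaResidual]
  simp only [map_sub, map_add, map_sum, map_smul, sub_apply, one_apply_eq_self, smul_sub,
    Finset.sum_sub_distrib]
  abel

lemma norm_nkaResidual_modified_le (h : IsModifiedNKA A b x ε z z') (hε : 0 ≤ ε) (i : ℕ) :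
    ‖nkaResidual A b x i (z' i)‖ ≤ (1 + ε) * ‖nkaResidual A b x i (z i)‖ := by
  cases i with
  | zero =>
    simp only [nkaResidual, Finset.univ_eq_empty, Finset.sum_empty]
    exact le_mul_of_one_le_left (norm_nonneg _) (by linarith)
  | succ m =>
    have hlast := (h.safe (m + 1) (Fin.last m) (by simp)).norm_sub_smul_le hε (norm_nonneg _)
    calc _ ≤ ‖nkaResidual A b x (m + 1) (z (m + 1))‖ +
          ε * ‖nkaResidual A b x (m + 1) (z (m + 1))‖ :=
          (norm_sub_sum_smul_le_of_forall_ne (l := Fin.last m) _ _ fun j hj =>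
            h.agree _ j fun hj' => hj (Fin.ext (by simp; omega))).trans (add_le_add le_rfl hlast)
      _ = _ := by ring

lemma norm_nkaResidual_pos (h : IsModifiedNKA A b x ε z z') (hε : 0 ≤ ε) {i : ℕ}
    (hsol : A (x (i + 1)) ≠ b) : 0 < ‖nkaResidual A b x i (z i)‖ := by
  refine (norm_nonneg _).lt_of_ne fun h0 => hsol (sub_eq_zero.1 ?_)
  have : nkaResidual A b x i (z' i) = 0 :=
    norm_le_zero_iff.1 ((h.norm_nkaResidual_modified_le hε i).trans_eq (by rw [← h0, mul_zero]))
  rw [h.residual_succ, this, map_zero]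

lemma residual_mem_krylov {i : ℕ} (hv : ∀ j < i, x j - x (j + 1) ∈ 𝒦 (j + 1)) :
    A (x i) - b ∈ 𝒦 (i + 1) := by
  induction i with
  | zero => simpa using pow_apply_mem_krylov (f := (A : E →ₗ[ℝ] E)) (r := A (x 0) - b) one_pos
  | succ i ih =>
    have hr : A (x (i + 1)) - b = (A (x i) - b) - A (x i - x (i + 1)) := by
      rw [map_sub]; abel
    rw [hr]
    exact sub_mem (krylov_mono (by omega) (ih fun j hj => hv j (hj.trans i.lt_succ_self)))
      (apply_mem_krylov_succ (hv i i.lt_succ_self))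

lemma step_add_smul_mem_krylov (h : IsModifiedNKA A b x ε z z') {i : ℕ}
    (hv : ∀ j < i + 1, x j - x (j + 1) ∈ 𝒦 (j + 1)) :
    x (i + 1) - x (i + 2) + (z' (i + 1) (Fin.last i) + 1) • A (x i - x (i + 1)) ∈
      𝒦 (i + 1) := by
  have hsplit : x (i + 1) - x (i + 2) + (z' (i + 1) (Fin.last i) + 1) • A (x i - x (i + 1)) =
      ∑ j : Fin (i + 1), z' (i + 1) j • (x j - x (j + 1)) + (A (x i) - b) -
        ∑ j : Fin i, z' (i + 1) j.castSucc • A (x j - x (j + 1)) := by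
    rw [h.step (i + 1), nkaResidual, Fin.sum_univ_castSucc (n := i)
      (f := fun j => z' (i + 1) j • A (x j.1 - x (j.1 + 1)))]
    simp only [Fin.val_castSucc, Fin.val_last, map_sub]
    module
  rw [hsplit]
  refine sub_mem (add_mem (sum_mem fun j _ => smul_mem _ _ ?_) ?_)
    (sum_mem fun j _ => smul_mem _ _ ?_)
  · exact krylov_mono (by omega) (hv j j.2)
  · exact residual_mem_krylov fun j hj => hv j (hj.trans i.lt_succ_self)
  · exact krylov_mono (by omega) (apply_mem_krylov_succ (hv j (j.2.trans i.lt_succ_self)))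

lemma pow_notMem_krylov (h : IsModifiedNKA A b x ε z z') (hA : Injective A) {i : ℕ}
    (hi : 1 ≤ i) (hKV : 𝒦 i ≤ span ℝ (Set.range fun j : Fin i => x j - x (j + 1)))
    (hρ : 0 < ‖nkaResidual A b x i (z i)‖) :
    ((A : E →ₗ[ℝ] E) ^ i) (A (x 0) - b) ∉ 𝒦 i := by
  intro hpow
  have hr₀ : A (x 0) - b ∈ (𝒦 i).map (A : E →ₗ[ℝ] E) := by
    rw [map_krylov_eq_of_pow_mem hA hpow]
    simpa using pow_apply_mem_krylov (f := (A : E →ₗ[ℝ] E)) (r := A (x 0) - b) hi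
  obtain ⟨d, hd, hAd⟩ := mem_map.1 hr₀
  -- `x₀ - d` solves `A u = b` and lies in `xᵢ + span vⱼ`, so the least-squares residual vanishes
  have hle := le_norm_residual_of_sub_mem_span A b x (h.isMin i) (u := x 0 - d)
    (by rw [sub_right_comm]; exact sub_mem (sub_mem_span_range_sub x i) (hKV hd))
  have hsol : A (x 0 - d) - b = 0 := by
    rw [map_sub, show A d = A (x 0) - b from hAd]
    abel
  rw [hsol, norm_zero] at hle
  exact hle.not_gt hρ

lemma step_mem_krylov_diff (h : IsModifiedNKA A b x ε z z') (hA : Injective A)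
    (hε : 0 < ε) {n : ℕ} (hsol : ∀ j ≤ n, A (x j) ≠ b) :
    ∀ i < n, x i - x (i + 1) ∈ 𝒦 (i + 1) ∧ x i - x (i + 1) ∉ 𝒦 i := by
  intro i
  induction i using Nat.strong_induction_on with
  | _ i ih =>
  intro hi
  cases i with
  | zero =>
    have hv₀ : x 0 - x 1 = A (x 0) - b := by
      rw [h.step 0]
      simp [nkaResidual]
    rw [hv₀, krylov_zero, mem_bot, sub_eq_zero]
    exact ⟨by simpa using pow_apply_mem_krylov (f := (A : E →ₗ[ℝ] E)) (r := A (x 0) - b) one_pos,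
      hsol 0 (Nat.zero_le _)⟩
  | succ i =>
    have hprev : ∀ j < i + 1, x j - x (j + 1) ∈ 𝒦 (j + 1) ∧ x j - x (j + 1) ∉ 𝒦 j :=
      fun j hj => ih j hj (by omega)
    have hρ := h.norm_nkaResidual_pos hε.le (hsol (i + 2) (by omega))
    have hw : A (x i - x (i + 1)) ∉ 𝒦 (i + 1) :=
      apply_notMem_krylov_succ (hprev i i.lt_succ_self).1 (hprev i i.lt_succ_self).2
        (h.pow_notMem_krylov hA i.succ_pos
          (krylov_le_span (v := fun j => x j - x (j + 1)) hprev) hρ)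
    have hc : z' (i + 1) (Fin.last i) + 1 ≠ 0 :=
      (h.safe (i + 1) (Fin.last i) (by simp)).add_one_ne_zero hε hρ fun h0 =>
        hw (h0 ▸ zero_mem _)
    have hmod := h.step_add_smul_mem_krylov fun j hj => (hprev j hj).1
    constructor
    · rw [← add_sub_cancel_right (x (i + 1) - x (i + 2))
        ((z' (i + 1) (Fin.last i) + 1) • A (x i - x (i + 1)))]
      exact sub_mem (krylov_mono (i + 1).le_succ hmod)
        (smul_mem _ _ (apply_mem_krylov_succ (hprev i i.lt_succ_self).1))
    · exact fun hv => hw ((smul_mem_iff _ hc).1 ((Submodule.add_mem_iff_right _ hv).1 hmod))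

end IsModifiedNKA

end NKA

theorem stmt_2_general (N : ℕ)
    (A : EuclideanSpace ℝ (Fin N) →L[ℝ] EuclideanSpace ℝ (Fin N))
    (hA : Function.Bijective ⇑A)
    (b : EuclideanSpace ℝ (Fin N)) (ε : ℝ) (hε : 0 < ε)
    (x : ℕ → EuclideanSpace ℝ (Fin N))
    (z z' : (i : ℕ) → Fin i → ℝ)
    (hx1 : x 1 = x 0 - (A (x 0) - b))
    (hmin : ∀ i : ℕ, 1 ≤ i → ∀ y : Fin i → ℝ,
      ‖(A (x i) - b) - ∑ j : Fin i, z i j • A (x j.1 - x (j.1 + 1))‖ ≤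
        ‖(A (x i) - b) - ∑ j : Fin i, y j • A (x j.1 - x (j.1 + 1))‖)
    (hagree : ∀ i : ℕ, 1 ≤ i → ∀ j : Fin i, j.1 + 1 ≠ i → z' i j = z i j)
    (hsafe : ∀ i : ℕ, 1 ≤ i → ∀ j : Fin i, j.1 + 1 = i →
      (A (x j.1 - x (j.1 + 1)) ≠ 0 →
        ∃ s : ℝ, (s = 1 ∨ s = -1) ∧
          z' i j = z i j + s * ε *
            ‖(A (x i) - b) - ∑ l : Fin i, z i l • A (x l.1 - x (l.1 + 1))‖ /
              ‖A (x j.1 - x (j.1 + 1))‖ ∧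
          ∀ t : ℝ, (t = 1 ∨ t = -1) →
            |z i j + t * ε *
              ‖(A (x i) - b) - ∑ l : Fin i, z i l • A (x l.1 - x (l.1 + 1))‖ /
                ‖A (x j.1 - x (j.1 + 1))‖ + 1| ≤ |z' i j + 1|) ∧
      (A (x j.1 - x (j.1 + 1)) = 0 → z' i j = z i j))
    (hupd : ∀ i : ℕ, 1 ≤ i →
      x (i + 1) = x i - (∑ j : Fin i, z' i j • (x j.1 - x (j.1 + 1)) +
        ((A (x i) - b) - ∑ j : Fin i, z' i j • A (x j.1 - x (j.1 + 1)))))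
    (n : ℕ)
    (hsol : ∀ j : ℕ, j ≤ n → A (x j) ≠ b)
    (xG : ℕ → EuclideanSpace ℝ (Fin N))
    (hGmem : ∀ j : ℕ, xG j - x 0 ∈
      Submodule.span ℝ (Set.range fun k : Fin j => (A ^ k.1) (A (x 0) - b))) :
    ‖A (x (n + 1)) - b‖ ≤
      (1 + ε) * ‖(1 : EuclideanSpace ℝ (Fin N) →L[ℝ] EuclideanSpace ℝ (Fin N)) - A‖ *
        ‖A (xG n) - b‖ := by
  have hnka : IsModifiedNKA A b x ε z z' :=
    { step := fun i => by
        rcases i with _ | i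
        · simpa [nkaResidual] using hx1
        · exact hupd (i + 1) i.succ_pos
      isMin := fun i y => by
        rcases i with _ | i
        · rw [Subsingleton.elim y (z 0)]
        · exact hmin (i + 1) i.succ_pos y
      agree := fun i j => hagree i j.pos j
      safe := fun i j => hsafe i j.pos j }
  have hKV := krylov_le_span (v := fun j => x j - x (j + 1))
    (hnka.step_mem_krylov_diff hA.injective hε hsol)
  have hG : xG n - x 0 ∈ krylov (A : EuclideanSpace ℝ (Fin N) →ₗ[ℝ] _) (A (x 0) - b) n := by
    simpa [krylov, ← ContinuousLinearMap.toLinearMap_pow] using hGmem n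
  have hxG : xG n - x n ∈ span ℝ (Set.range fun j : Fin n => x j - x (j + 1)) := by
    rw [← sub_add_sub_cancel _ (x 0)]
    exact add_mem (hKV hG) (sub_mem_span_range_sub x n)
  calc ‖A (x (n + 1)) - b‖ = ‖(1 - A) (nkaResidual A b x n (z' n))‖ := by
        rw [hnka.residual_succ]
    _ ≤ ‖1 - A‖ * ((1 + ε) * ‖nkaResidual A b x n (z n)‖) :=
        (ContinuousLinearMap.le_opNorm _ _).trans
          (mul_le_mul_of_nonneg_left (hnka.norm_nkaResidual_modified_le hε.le n) (norm_nonneg _))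
    _ ≤ ‖1 - A‖ * ((1 + ε) * ‖A (xG n) - b‖) := by
        gcongr
        exact le_norm_residual_of_sub_mem_span A b x (hnka.isMin n) hxG
    _ = _ := by ring

/-- **Theorem 2 (modified NKA vs. GMRES).**
`A` is an invertible `N × N` real matrix, `f x = A x - b`, `ε > 0`, and
`x 0, x 1, …` is the ε-modified full-memory NKA iteration: `x 1 = x 0 - f (x 0)`; for
`i ≥ 1`, with `v j = x j - x (j+1)` and `w j = A v j` for `j = 0, …, i-1`
(the paper's `v₁, …, vᵢ, w₁, …, wᵢ`), `z i` minimizes `‖f (x i) - ∑ⱼ y j • w j‖₂`;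
the modified coefficients `z' i` agree with `z i` except in the last entry, which, when
`w_i ≠ 0`, equals `z i + s·ε·‖f (x i) - ∑ⱼ z i j • w j‖₂ / ‖w_i‖₂` with sign
`s = ±1` chosen to maximize `|z'ᵢ⁽ⁱ⁾ + 1|`; then
`x (i+1) = x i - (∑ⱼ z' i j • v j + (f (x i) - ∑ⱼ z' i j • w j))`.
Assuming `A (x j) ≠ b` for `0 ≤ j ≤ n`, the `(n+1)`-st NKA residual is controlled by
the `n`-th GMRES residual: `‖r_{n+1}‖₂ ≤ (1 + ε) ⬝ ‖I - A‖ ⬝ ‖r_n^G‖₂`. -/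
theorem stmt_2 (N : ℕ)
    (A : EuclideanSpace ℝ (Fin N) →L[ℝ] EuclideanSpace ℝ (Fin N))
    (hA : Function.Bijective ⇑A)
    (b : EuclideanSpace ℝ (Fin N)) (ε : ℝ) (hε : 0 < ε)
    (x : ℕ → EuclideanSpace ℝ (Fin N))
    (z z' : (i : ℕ) → Fin i → ℝ)
    (hx1 : x 1 = x 0 - (A (x 0) - b))
    (hmin : ∀ i : ℕ, 1 ≤ i → ∀ y : Fin i → ℝ,
      ‖(A (x i) - b) - ∑ j : Fin i, z i j • A (x j.1 - x (j.1 + 1))‖ ≤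
        ‖(A (x i) - b) - ∑ j : Fin i, y j • A (x j.1 - x (j.1 + 1))‖)
    (hagree : ∀ i : ℕ, 1 ≤ i → ∀ j : Fin i, j.1 + 1 ≠ i → z' i j = z i j)
    (hsafe : ∀ i : ℕ, 1 ≤ i → ∀ j : Fin i, j.1 + 1 = i →
      (A (x j.1 - x (j.1 + 1)) ≠ 0 →
        ∃ s : ℝ, (s = 1 ∨ s = -1) ∧
          z' i j = z i j + s * ε *
            ‖(A (x i) - b) - ∑ l : Fin i, z i l • A (x l.1 - x (l.1 + 1))‖ /
              ‖A (x j.1 - x (j.1 + 1))‖ ∧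
          ∀ t : ℝ, (t = 1 ∨ t = -1) →
            |z i j + t * ε *
              ‖(A (x i) - b) - ∑ l : Fin i, z i l • A (x l.1 - x (l.1 + 1))‖ /
                ‖A (x j.1 - x (j.1 + 1))‖ + 1| ≤ |z' i j + 1|) ∧
      (A (x j.1 - x (j.1 + 1)) = 0 → z' i j = z i j))
    (hupd : ∀ i : ℕ, 1 ≤ i →
      x (i + 1) = x i - (∑ j : Fin i, z' i j • (x j.1 - x (j.1 + 1)) +
        ((A (x i) - b) - ∑ j : Fin i, z' i j • A (x j.1 - x (j.1 + 1)))))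
    (n : ℕ)
    (hsol : ∀ j : ℕ, j ≤ n → A (x j) ≠ b)
    (xG : ℕ → EuclideanSpace ℝ (Fin N))
    (hGmem : ∀ j : ℕ, xG j - x 0 ∈
      Submodule.span ℝ (Set.range fun k : Fin j => (A ^ k.1) (A (x 0) - b)))
    (hGmin : ∀ j : ℕ, ∀ u : EuclideanSpace ℝ (Fin N),
      u - x 0 ∈ Submodule.span ℝ (Set.range fun k : Fin j => (A ^ k.1) (A (x 0) - b)) →
      ‖A (xG j) - b‖ ≤ ‖A u - b‖) :
    ‖A (x (n + 1)) - b‖ ≤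
      (1 + ε) * ‖(1 : EuclideanSpace ℝ (Fin N) →L[ℝ] EuclideanSpace ℝ (Fin N)) - A‖ *
        ‖A (xG n) - b‖ :=
  stmt_2_general N A hA b ε hε x z z' hx1 hmin hagree hsafe hupd n hsol xG hGmem
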